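/- arXiv:2109.04826 — 4 statements merged into one kernel-verified Lean document; each statement's English description precedes it below -/
import Mathlib

section
/- Let G be a graph of order n and suppose {u,v} is a 2-element vertex set that forms an odd pair with some 2-element set Y disjoint from it. Then there exist at least n − 3 odd pairs of G whose first component is X = {u,v}. -/
open SimpleGraph Finset
open scoped Classical

variable {V : Type*}

/-- The Seidel matrix of a graph: zero diagonal, `-1` for adjacent pairs, `+1` otherwise. -/
noncomputable def seidelMatrix (G : SimpleGraph V) : Matrix V V ℝ :=
  fun i j => if i = j then 0 else if G.Adj i j then -1 else 1

theorem seidelMatrix_isHermitian (G : SimpleGraph V) : (seidelMatrix G).IsHermitian := by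
  unfold Matrix.IsHermitian
  ext i j
  by_cases h : i = j
  · subst h; simp [seidelMatrix]
  · simp [seidelMatrix, Matrix.conjTranspose_apply, h, Ne.symm h, G.adj_comm j i]

/-- The Seidel energy: sum of absolute values of the eigenvalues of the Seidel matrix. -/
noncomputable def seidelEnergy [Fintype V] (G : SimpleGraph V) : ℝ :=
  ∑ i, |(seidelMatrix_isHermitian G).eigenvalues i|

/-- Number of edges with one endpoint in `X` and the other in `Y` (for disjoint `X Y`). -/
noncomputable def edgeCount (G : SimpleGraph V) (X Y : Finset V) : ℕ :=
  ∑ x ∈ X, ∑ y ∈ Y, if G.Adj x y then 1 else 0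

/-- `(X, Y)` is an odd pair: disjoint 2-element sets with an odd number of edges between them. -/
def IsOddPair (G : SimpleGraph V) (X Y : Finset V) : Prop :=
  X.card = 2 ∧ Y.card = 2 ∧ Disjoint X Y ∧ Odd (edgeCount G X Y)

/-- `X` is an odd set: a 2-element set which is the first component of some odd pair. -/
def IsOddSet (G : SimpleGraph V) (X : Finset V) : Prop :=
  X.card = 2 ∧ ∃ Y : Finset V, Y.card = 2 ∧ Disjoint X Y ∧ Odd (edgeCount G X Y)

/-- The graph `Λ(G)` whose edges are the odd sets of `G`. -/
def lambdaGraph (G : SimpleGraph V) : SimpleGraph V where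
  Adj u v := u ≠ v ∧ IsOddSet G {u, v}
  symm := by
    constructor
    rintro u v ⟨h1, h2⟩
    exact ⟨h1.symm, by rwa [Finset.pair_comm]⟩
  loopless := by constructor; rintro u ⟨h1, -⟩; exact h1 rfl

/-- Seidel switching of `G` with respect to the partition `(S, Sᶜ)`. -/
def seidelSwitch (G : SimpleGraph V) (S : Set V) : SimpleGraph V where
  Adj u v := u ≠ v ∧ (G.Adj u v ↔ ((u ∈ S) ↔ (v ∈ S)))
  symm := by
    constructor
    rintro u v ⟨h1, h2⟩
    refine ⟨h1.symm, ?_⟩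
    rw [G.adj_comm]
    tauto
  loopless := by constructor; rintro u ⟨h1, -⟩; exact h1 rfl

/-- The degree of a vertex. -/
noncomputable def degree' (G : SimpleGraph V) (v : V) : ℕ := Nat.card {x : V // G.Adj v x}

/-- `D(G)`: the maximum number of leaves adjacent to a single vertex. -/
noncomputable def maxLeafCount [Fintype V] (G : SimpleGraph V) : ℕ :=
  Finset.univ.sup fun w => Nat.card {u : V // G.Adj w u ∧ degree' G u = 1}

/-- The number of odd pairs of `G`. -/
noncomputable def numOddPairs [Fintype V] (G : SimpleGraph V) : ℕ :=
  Nat.card {p : Finset V × Finset V // IsOddPair G p.1 p.2}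

/-- The number of odd sets of `G`. -/
noncomputable def numOddSets [Fintype V] (G : SimpleGraph V) : ℕ :=
  Nat.card {X : Finset V // IsOddSet G X}

/-- `G` is a star: some center vertex lies on every edge. -/
def IsStar (G : SimpleGraph V) : Prop := ∃ c : V, ∀ u v : V, G.Adj u v → u = c ∨ v = c

/-!
Write `X = {u, v}` and call a vertex `w ∉ X` odd or even according to the parity of the number of
its neighbours in `X`. For `Y = {a, b}` disjoint from `X` the number of `X`–`Y` edges is the sum of
these counts for `a` and `b`, so `(X, Y)` is an odd pair exactly when one of `a, b` is odd and the
other even. An odd pair exists, so both classes are nonempty; their sizes `p, q ≥ 1` add up to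
`n - 2`, and the `p * q` pairs they produce number at least `p + q - 1 = n - 3`.
-/

namespace SimpleGraph

variable (G : SimpleGraph V)

theorem edgeCount_pair_right (X : Finset V) {w z : V} (hwz : w ≠ z) :
    edgeCount G X {w, z} = edgeCount G X {w} + edgeCount G X {z} := by
  simp only [edgeCount, sum_pair hwz, sum_singleton, sum_add_distrib]

theorem odd_edgeCount_pair_right_iff (X : Finset V) {w z : V} (hwz : w ≠ z) :
    Odd (edgeCount G X {w, z}) ↔ (Odd (edgeCount G X {w}) ↔ Even (edgeCount G X {z})) := by
  rw [edgeCount_pair_right G X hwz, Nat.odd_add]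

variable [Fintype V]

noncomputable def oddSide (X : Finset V) : Finset V :=
  Xᶜ.filter fun w => Odd (edgeCount G X {w})

noncomputable def evenSide (X : Finset V) : Finset V :=
  Xᶜ.filter fun w => ¬Odd (edgeCount G X {w})

theorem disjoint_oddSide_evenSide (X : Finset V) : Disjoint (oddSide G X) (evenSide G X) :=
  disjoint_filter_filter_not _ _ _

theorem card_oddSide_add_card_evenSide (X : Finset V) :
    #(oddSide G X) + #(evenSide G X) = Fintype.card V - #X := by
  rw [oddSide, evenSide, card_filter_add_card_filter_not, card_compl]

theorem isOddPair_pair_of_mem_oddSide_of_mem_evenSide {X : Finset V} (hX : #X = 2) {a b : V}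
    (ha : a ∈ oddSide G X) (hb : b ∈ evenSide G X) : IsOddPair G X {a, b} := by
  simp only [oddSide, evenSide, mem_filter, mem_compl] at ha hb
  have hab : a ≠ b := by rintro rfl; exact hb.2 ha.2
  refine ⟨hX, card_pair hab, ?_, ?_⟩
  · rw [disjoint_insert_right, disjoint_singleton_right]
    exact ⟨ha.1, hb.1⟩
  · exact (odd_edgeCount_pair_right_iff G X hab).2 (iff_of_true ha.2 (Nat.not_odd_iff_even.1 hb.2))

theorem oddSide_nonempty_and_evenSide_nonempty {X Y : Finset V} (h : IsOddPair G X Y) :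
    (oddSide G X).Nonempty ∧ (evenSide G X).Nonempty := by
  obtain ⟨-, hY, hXY, hodd⟩ := h
  obtain ⟨a, b, hab, rfl⟩ := card_eq_two.1 hY
  have ha : a ∈ Xᶜ := mem_compl.2 fun h => Finset.disjoint_left.1 hXY h (mem_insert_self a {b})
  have hb : b ∈ Xᶜ :=
    mem_compl.2 fun h => Finset.disjoint_left.1 hXY h (mem_insert_of_mem (mem_singleton_self b))
  rw [odd_edgeCount_pair_right_iff G X hab, ← Nat.not_odd_iff_even] at hodd
  by_cases hodd_a : Odd (edgeCount G X {a})
  · exact ⟨⟨a, mem_filter.2 ⟨ha, hodd_a⟩⟩, ⟨b, mem_filter.2 ⟨hb, hodd.1 hodd_a⟩⟩⟩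
  · exact ⟨⟨b, mem_filter.2 ⟨hb, not_not.1 (mt hodd.2 hodd_a)⟩⟩, ⟨a, mem_filter.2 ⟨ha, hodd_a⟩⟩⟩

theorem card_oddSide_mul_card_evenSide_le {X : Finset V} (hX : #X = 2) :
    #(oddSide G X) * #(evenSide G X) ≤ Nat.card {Y : Finset V // IsOddPair G X Y} := by
  rw [← card_product, ← Set.ncard_coe_finset]
  refine Set.ncard_le_ncard_of_injOn (t := {Y | IsOddPair G X Y}) (fun p => {p.1, p.2}) ?_ ?_
    (Set.toFinite _)
  · rintro ⟨a, b⟩ hp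
    rw [coe_product, Set.mem_prod] at hp
    exact isOddPair_pair_of_mem_oddSide_of_mem_evenSide G hX hp.1 hp.2
  · rintro ⟨a, b⟩ hp ⟨a', b'⟩ hp' (heq : ({a, b} : Finset V) = {a', b'})
    rw [coe_product, Set.mem_prod] at hp hp'
    have hsides := disjoint_oddSide_evenSide G X
    have ha : a ∈ ({a', b'} : Finset V) := heq ▸ mem_insert_self a {b}
    have hb : b ∈ ({a', b'} : Finset V) := heq ▸ mem_insert_of_mem (mem_singleton_self b)
    simp only [mem_insert, mem_singleton] at ha hb
    rcases ha with rfl | rfl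
    · rcases hb with rfl | rfl
      · exact absurd hp.2 (Finset.disjoint_left.1 hsides hp.1)
      · rfl
    · exact absurd hp'.2 (Finset.disjoint_left.1 hsides hp.1)

theorem card_sub_card_sub_one_le_card_isOddPair {X Y : Finset V} (h : IsOddPair G X Y) :
    Fintype.card V - #X - 1 ≤ Nat.card {Y : Finset V // IsOddPair G X Y} := by
  obtain ⟨⟨a, ha⟩, ⟨b, hb⟩⟩ := G.oddSide_nonempty_and_evenSide_nonempty h
  have hp := card_pos.2 ⟨a, ha⟩
  have hq := card_pos.2 ⟨b, hb⟩
  have hsum := G.card_oddSide_add_card_evenSide X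
  have hprod := G.card_oddSide_mul_card_evenSide_le h.1
  have hpq : #(G.oddSide X) + #(G.evenSide X) ≤ #(G.oddSide X) * #(G.evenSide X) + 1 := by
    nlinarith
  omega

end SimpleGraph

theorem oddPairs_with_fixed_first_component_general [Fintype V] (G : SimpleGraph V) (u v : V)
    (h : ∃ Y : Finset V, IsOddPair G {u, v} Y) :
    Fintype.card V - 3 ≤ Nat.card {Y : Finset V // IsOddPair G ({u, v} : Finset V) Y} := by
  obtain ⟨Y, hY⟩ := h
  have := G.card_sub_card_sub_one_le_card_isOddPair hY
  rw [hY.1] at this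
  omega

/-- if `{u,v}` is the first component of some odd pair, then it is the first
component of at least `n - 3` odd pairs. -/
theorem oddPairs_with_fixed_first_component [Fintype V] (G : SimpleGraph V) (u v : V)
    (hne : u ≠ v) (h : ∃ Y : Finset V, IsOddPair G {u, v} Y) :
    Fintype.card V - 3 ≤ Nat.card {Y : Finset V // IsOddPair G ({u, v} : Finset V) Y} :=
  oddPairs_with_fixed_first_component_general G u v h
end

section
/- Let T be a tree of order n ≥ 4 and let u, v be distinct vertices at distance d ≥ 4 in T. Then {u,v} is an odd set of T, i.e., uv is an edge of Λ(T). -/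
open SimpleGraph Finset
open scoped Classical

variable {V : Type*}

/-!
Take the first two steps `u x y` of a shortest path from `u` to `v`. Since `dist u y = 2`,
`dist x v = d - 1 ≥ 3` and `dist y v = d - 2 ≥ 2`, the edge `ux` is the only edge between
`{u, v}` and `{x, y}`.
-/

lemma isOddSet_pair_of_adj_of_not_adj {G : SimpleGraph V} {u v x y : V}
    (hux : G.Adj u x) (hxy : G.Adj x y) (huy : u ≠ y) (huy' : ¬G.Adj u y)
    (hvx : ¬G.Adj v x) (hvy : ¬G.Adj v y) : IsOddSet G {u, v} := by
  have huv : u ≠ v := by rintro rfl; exact hvx hux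
  have hxv : x ≠ v := by rintro rfl; exact hvy hxy
  have hyv : y ≠ v := by rintro rfl; exact hvx hxy.symm
  have hedges : edgeCount G {u, v} {x, y} = 1 := by
    simp [edgeCount, Finset.sum_pair huv, Finset.sum_pair hxy.ne, hux, huy', hvx, hvy]
  refine ⟨Finset.card_pair huv, {x, y}, Finset.card_pair hxy.ne, ?_, hedges ▸ odd_one⟩
  simp [hux.ne', huy.symm, hxv, hyv]

lemma exists_adj_dist_eq_of_dist_eq_succ {G : SimpleGraph V} {u v : V} {n : ℕ}
    (h : G.dist u v = n + 1) : ∃ x, G.Adj u x ∧ G.dist x v = n := by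
  obtain ⟨p, hp⟩ := exists_walk_of_dist_ne_zero (by omega : G.dist u v ≠ 0)
  cases p with
  | nil => simp at h
  | @cons _ x _ hux q =>
    refine ⟨x, hux, le_antisymm ?_ ?_⟩
    · have := dist_le q
      simp only [Walk.length_cons] at hp
      omega
    · have := hux.reachable.dist_triangle_left v
      rw [dist_eq_one_iff_adj.mpr hux] at this
      omega

theorem oddSet_of_dist_ge_four_general (T : SimpleGraph V) (u v : V) (hd : 4 ≤ T.dist u v) :
    IsOddSet T {u, v} := by
  obtain ⟨n, hn⟩ : ∃ n, T.dist u v = n + 3 + 1 := ⟨T.dist u v - 4, by omega⟩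
  obtain ⟨x, hux, hxv⟩ := exists_adj_dist_eq_of_dist_eq_succ hn
  obtain ⟨y, hxy, hyv⟩ := exists_adj_dist_eq_of_dist_eq_succ hxv
  have huy : 2 ≤ T.dist u y := by
    have := (Reachable.of_dist_ne_zero (by omega : T.dist y v ≠ 0)).dist_triangle_right u
    omega
  have not_adj_of_two_le_dist {a b : V} (h : 2 ≤ T.dist a b) : ¬T.Adj a b := fun hab => by
    rw [dist_eq_one_iff_adj.mpr hab] at h
    omega
  refine isOddSet_pair_of_adj_of_not_adj hux hxy ?_ (not_adj_of_two_le_dist huy)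
    (not_adj_of_two_le_dist ?_) (not_adj_of_two_le_dist ?_)
  · rintro rfl
    simp at huy
  · rw [SimpleGraph.dist_comm, hxv]; omega
  · rw [SimpleGraph.dist_comm, hyv]; omega

/-- in a tree of order at least 4, vertices at distance at least 4 form an
odd set. -/
theorem oddSet_of_dist_ge_four [Fintype V] (T : SimpleGraph V) (hT : T.IsTree)
    (hn : 4 ≤ Fintype.card V) (u v : V) (hd : 4 ≤ T.dist u v) :
    IsOddSet T {u, v} :=
  oddSet_of_dist_ge_four_general T u v hd
end

section
/- Let T be a tree of order n ≥ 4 and let u, v be distinct vertices with distance exactly 2 in T such that {u,v} is not an odd set of T. Then u and v are both leaves of T adjacent to their (unique) common neighbor. -/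
open SimpleGraph Finset
open scoped Classical

variable {V : Type*}

/-! A tree has no 4-cycle, so two vertices `u, v` at distance 2 have exactly one common
neighbour `w`. If `u` had a second neighbour `x`, then `x` is not adjacent to `v`, and the set
`{w, x}` receives exactly three edges from `{u, v}`, making `{u, v}` an odd set. Hence both
`u` and `v` have `w` as their only neighbour. -/

lemma edgeCount_pair_pair (G : SimpleGraph V) {a b c d : V} (hab : a ≠ b) (hcd : c ≠ d) :
    edgeCount G {a, b} {c, d} =
      ((if G.Adj a c then 1 else 0) + if G.Adj a d then 1 else 0) +
        ((if G.Adj b c then 1 else 0) + if G.Adj b d then 1 else 0) := by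
  rw [edgeCount, sum_pair hab, sum_pair hcd, sum_pair hcd]

lemma degree'_eq_one_of_forall_adj_eq {G : SimpleGraph V} {v w : V} (hvw : G.Adj v w)
    (h : ∀ x, G.Adj v x → x = w) : degree' G v = 1 :=
  Nat.card_eq_one_iff_exists.mpr ⟨⟨w, hvw⟩, fun y => Subtype.ext (h y y.2)⟩

namespace SimpleGraph

variable {G : SimpleGraph V}

lemma IsAcyclic.eq_of_mem_commonNeighbors (hG : G.IsAcyclic) {u v w x : V} (huv : u ≠ v)
    (hw : w ∈ G.commonNeighbors u v) (hx : x ∈ G.commonNeighbors u v) : w = x := by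
  rw [mem_commonNeighbors] at hw hx
  have hpw : (Walk.cons hw.1 (Walk.cons hw.2.symm Walk.nil)).IsPath := by
    simp [Walk.isPath_def, hw.1.ne, huv, hw.2.ne']
  have hpx : (Walk.cons hx.1 (Walk.cons hx.2.symm Walk.nil)).IsPath := by
    simp [Walk.isPath_def, hx.1.ne, huv, hx.2.ne']
  have hpaths := congrArg Subtype.val ((hG.subsingleton_path u v).elim ⟨_, hpw⟩ ⟨_, hpx⟩)
  exact (Walk.cons.inj hpaths).1

lemma IsAcyclic.isOddSet_pair (hG : G.IsAcyclic) {u v w x : V} (huv : u ≠ v)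
    (hnadj : ¬G.Adj u v) (huw : G.Adj u w) (hvw : G.Adj v w) (hux : G.Adj u x)
    (hxw : x ≠ w) : IsOddSet G {u, v} := by
  have hxv : x ≠ v := by rintro rfl; exact hnadj hux
  have hvx : ¬G.Adj v x := fun hvx =>
    hxw (hG.eq_of_mem_commonNeighbors huv ⟨hux, hvx⟩ ⟨huw, hvw⟩)
  refine ⟨card_pair huv, {w, x}, card_pair hxw.symm, ?_, ?_⟩
  · simp [huw.ne', hux.ne', hvw.ne', hxv]
  · rw [edgeCount_pair_pair G huv hxw.symm]
    simp [huw, hux, hvw, hvx, Nat.odd_iff]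

lemma IsAcyclic.degree'_eq_one_of_not_isOddSet (hG : G.IsAcyclic) {u v w : V} (huv : u ≠ v)
    (hnadj : ¬G.Adj u v) (huw : G.Adj u w) (hvw : G.Adj v w) (h : ¬IsOddSet G {u, v}) :
    degree' G u = 1 :=
  degree'_eq_one_of_forall_adj_eq huw fun x hux => by
    by_contra hxw
    exact h (hG.isOddSet_pair huv hnadj huw hvw hux hxw)

end SimpleGraph

theorem dist_two_not_oddSet_general (T : SimpleGraph V) (hT : T.IsTree)
    (u v : V) (hd : T.dist u v = 2)
    (h : ¬ IsOddSet T {u, v}) :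
    degree' T u = 1 ∧ degree' T v = 1 ∧ ∃ w, T.Adj u w ∧ T.Adj v w := by
  obtain ⟨huv, hnadj, w, hw⟩ := edist_eq_two_iff.mp ((ENat.toNat_eq_iff two_ne_zero).mp hd)
  rw [mem_commonNeighbors] at hw
  refine ⟨hT.isAcyclic.degree'_eq_one_of_not_isOddSet huv hnadj hw.1 hw.2 h, ?_, w, hw⟩
  rw [pair_comm] at h
  exact hT.isAcyclic.degree'_eq_one_of_not_isOddSet huv.symm (hnadj ∘ .symm) hw.2 hw.1 h

/-- in a tree of order at least 4, if `u, v` at distance 2 do not form an odd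
set, then both are leaves sharing their common neighbor. -/
theorem dist_two_not_oddSet [Fintype V] (T : SimpleGraph V) (hT : T.IsTree)
    (hn : 4 ≤ Fintype.card V) (u v : V) (hd : T.dist u v = 2)
    (h : ¬ IsOddSet T {u, v}) :
    degree' T u = 1 ∧ degree' T v = 1 ∧ ∃ w, T.Adj u w ∧ T.Adj v w :=
  dist_two_not_oddSet_general T hT u v hd h
end

section
/- Let T be a tree of order n ≥ 4 that is not a star, and not a path on 4, 5, or 6 vertices. Then the number of odd sets of T is at least n(n − D(T))/2, where D(T) is the maximum number of leaves of T adjacent to a single vertex. -/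
open SimpleGraph Finset
open scoped Classical

variable {V : Type*}

/-!
A 2-set `{u, v}` fails to be odd exactly when every vertex outside it has the same parity of
neighbours in `{u, v}`. In a tree `T` this leaves two kinds of non-odd sets. Even parity means
`u, v` are leaves with a common neighbour `w`; there are at most `∑_w C(L_w, 2)` such sets, where
`L_w ≤ D` counts the leaves at `w`, and `∑_w L_w ≤ n - 2` as `T` is not a star. Odd parity means
`{u, v}` is a split pair: every other vertex is adjacent to exactly one of `u, v`. Counting degrees,
all vertices other than `u, v` are then leaves, except the inner vertices of a path `u - x - y - v`
when `u ≁ v`. Unless `T` is a short path, one of `u, v` carries two leaves, so `D ≥ 2`; such a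
vertex lies in every split pair, and two split pairs sharing a vertex coincide unless `T` is a
star. So there is at most one split pair, and at most `n (D - 1) / 2` of the `n (n - 1) / 2`
two-sets are not odd.
-/

lemma card_compl_pair_add_two [Fintype V] {u v : V} (huv : u ≠ v) :
    #({u, v}ᶜ : Finset V) + 2 = Fintype.card V := by
  rw [card_compl, card_pair huv, Nat.sub_add_cancel]
  simpa [card_pair huv] using card_le_univ ({u, v} : Finset V)

namespace SimpleGraph

section Leaves

variable [Fintype V] {G : SimpleGraph V}

lemma degree'_eq_degree (G : SimpleGraph V) (v : V) : degree' G v = G.degree v := by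
  rw [degree', Nat.card_eq_fintype_card, ← card_neighborSet_eq_degree]
  rfl

noncomputable def leafNeighbors (G : SimpleGraph V) (w : V) : Finset V :=
  {z | G.Adj w z ∧ G.degree z = 1}

@[simp]
lemma mem_leafNeighbors {w z : V} : z ∈ G.leafNeighbors w ↔ G.Adj w z ∧ G.degree z = 1 := by
  simp [leafNeighbors]

lemma card_leafNeighbors_le_maxLeafCount (G : SimpleGraph V) (w : V) :
    #(G.leafNeighbors w) ≤ maxLeafCount G := by
  have : Nat.card {u : V // G.Adj w u ∧ degree' G u = 1} = #(G.leafNeighbors w) := by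
    simp [Nat.card_eq_fintype_card, Fintype.card_subtype, leafNeighbors, degree'_eq_degree]
  exact this ▸ Finset.le_sup (f := fun w => Nat.card {u : V // G.Adj w u ∧ degree' G u = 1})
    (mem_univ w)

lemma eq_of_degree_eq_one {z w w' : V} (hz : G.degree z = 1) (hw : G.Adj z w)
    (hw' : G.Adj z w') : w = w' := by
  obtain ⟨a, -, ha⟩ := degree_eq_one_iff_existsUnique_adj.mp hz
  exact (ha w hw).trans (ha w' hw').symm

lemma sum_card_leafNeighbors_le (G : SimpleGraph V) :
    ∑ w, #(G.leafNeighbors w) ≤ #({z | G.degree z = 1} : Finset V) := by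
  rw [← card_biUnion]
  · exact card_le_card fun z hz => by
      obtain ⟨w, -, hz⟩ := mem_biUnion.mp hz
      simpa using (mem_leafNeighbors.mp hz).2
  · intro w₁ _ w₂ _ hw
    refine Finset.disjoint_left.mpr fun z hz₁ hz₂ => hw ?_
    rw [mem_leafNeighbors] at hz₁ hz₂
    exact eq_of_degree_eq_one hz₁.2 hz₁.1.symm hz₂.1.symm

lemma Connected.exists_adj_not_mem_pair (hG : G.Connected) (h3 : 3 ≤ Fintype.card V) (a b : V) :
    ∃ x y, (x = a ∨ x = b) ∧ y ≠ a ∧ y ≠ b ∧ G.Adj x y := by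
  obtain ⟨z, -, hz⟩ := exists_mem_notMem_of_card_lt_card (s := {a, b}) (t := univ)
    (by rw [card_univ]; exact card_le_two.trans_lt (by omega))
  obtain ⟨d, -, hd₁, hd₂⟩ := (hG.preconnected a z).some.exists_boundary_dart {a, b}
    (by simp) (by simpa using hz)
  simp only [Set.mem_insert_iff, Set.mem_singleton_iff, not_or] at hd₁ hd₂
  exact ⟨_, _, hd₁, hd₂.1, hd₂.2, d.adj⟩

lemma Connected.not_adj_of_degree_eq_one (hG : G.Connected) (h3 : 3 ≤ Fintype.card V) {a b : V}
    (ha : G.degree a = 1) (hb : G.degree b = 1) : ¬ G.Adj a b := by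
  intro hab
  obtain ⟨x, w, hx, hwa, hwb, hxw⟩ := hG.exists_adj_not_mem_pair h3 a b
  rcases hx with rfl | rfl
  · exact hwb (eq_of_degree_eq_one ha hxw hab)
  · exact hwa (eq_of_degree_eq_one hb hxw hab.symm)

lemma IsTree.card_leaves_add_two_le (hT : G.IsTree) (h3 : 3 ≤ Fintype.card V)
    (hstar : ¬ IsStar G) : #({z | G.degree z = 1} : Finset V) + 2 ≤ Fintype.card V := by
  have hsplit := card_filter_add_card_filter_not (s := univ) (fun z => G.degree z = 1)
  rw [card_univ] at hsplit
  by_contra! hlt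
  have : Nonempty V := hT.connected.nonempty
  obtain ⟨c, hc⟩ := card_le_one_iff_subset_singleton.mp
    (show #({z | ¬ G.degree z = 1} : Finset V) ≤ 1 by omega)
  refine hstar ⟨c, fun a b hab => ?_⟩
  by_contra! habc
  have hleaf : ∀ z, z ≠ c → G.degree z = 1 := fun z hz => by
    by_contra hz'
    exact hz (mem_singleton.mp (hc (by simpa using hz')))
  exact hT.connected.not_adj_of_degree_eq_one h3 (hleaf a habc.1) (hleaf b habc.2) hab

lemma IsTree.one_le_maxLeafCount (hT : G.IsTree) (h2 : 2 ≤ Fintype.card V) :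
    1 ≤ maxLeafCount G := by
  have : Nontrivial V := Fintype.one_lt_card_iff_nontrivial.mp h2
  obtain ⟨z, hz⟩ := hT.exists_vert_degree_one_of_nontrivial
  obtain ⟨w, hw⟩ := (G.degree_pos_iff_exists_adj z).mp (by omega)
  exact (card_pos.mpr ⟨z, mem_leafNeighbors.mpr ⟨hw.symm, hz⟩⟩).trans_le
    (card_leafNeighbors_le_maxLeafCount G w)

end Leaves

section Acyclic

variable {G : SimpleGraph V}

lemma IsAcyclic.not_adj_of_adj_of_adj (hG : G.IsAcyclic) {u v w : V} (huv : G.Adj u v)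
    (huw : G.Adj u w) : ¬ G.Adj v w := fun hvw =>
  hG.cliqueFree le_rfl {u, v, w} (is3Clique_triple_iff.mpr ⟨huv, huw, hvw⟩)

lemma IsAcyclic.eq_of_adj_of_adj (hG : G.IsAcyclic) {u v w₁ w₂ : V} (huv : u ≠ v)
    (h₁ : G.Adj u w₁) (h₁' : G.Adj w₁ v) (h₂ : G.Adj u w₂) (h₂' : G.Adj w₂ v) : w₁ = w₂ := by
  have hpath : ∀ {w} (h : G.Adj u w) (h' : G.Adj w v), (Walk.cons h (Walk.cons h' .nil)).IsPath :=
    fun h h' => by simp [Walk.isPath_def, h.ne, h'.ne, huv]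
  have := congrArg (fun p : G.Path u v => p.1.support)
    ((hG.subsingleton_path u v).elim ⟨_, hpath h₁ h₁'⟩ ⟨_, hpath h₂ h₂'⟩)
  simpa using this

lemma IsTree.nonempty_iso_pathGraph [Fintype V] (hT : G.IsTree) {a b : V} {p : G.Walk a b}
    (hp : p.IsPath) (hcover : ∀ z, z ∈ p.support) :
    Nonempty (G ≃g pathGraph (p.length + 1)) := by
  have hf : ∀ i, p.pathGraphHom i = p.support[i.1]'(by simpa using i.2) := fun _ => rfl
  have hbij : Function.Bijective p.pathGraphHom := by
    refine ⟨fun i j hij => Fin.ext ?_, fun z => ?_⟩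
    · simpa [hf, hp.support_nodup.getElem_inj_iff] using hij
    · obtain ⟨i, hi, rfl⟩ := List.mem_iff_getElem.mp (hcover z)
      exact ⟨⟨i, by simpa using hi⟩, rfl⟩
  let e := Equiv.ofBijective _ hbij
  have hle : pathGraph (p.length + 1) ≤ G.comap e := fun _ _ h => p.pathGraphHom.map_rel h
  have heq := (isTree_iff_minimal_connected.mp ((Iso.comap e G).isTree_iff.mpr hT)).eq_of_le
    (pathGraph_connected _) hle
  exact ⟨heq ▸ (Iso.comap e G).symm⟩

lemma IsTree.exists_iso_pathGraph_of_forall_mem [Fintype V] (hT : G.IsTree) {u x y v : V}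
    (hux : G.Adj u x) (hxy : G.Adj x y) (hyv : G.Adj y v) (huy : u ≠ y) (hxv : x ≠ v)
    (hx : 2 ≤ G.degree x) (hy : 2 ≤ G.degree y) (hu : #(G.leafNeighbors u) < 2)
    (hv : #(G.leafNeighbors v) < 2) (hcover : ∀ z, z = u ∨ z = x ∨ z = y ∨ z = v ∨
      z ∈ G.leafNeighbors u ∨ z ∈ G.leafNeighbors v) :
    ∃ k ∈ ({4, 5, 6} : Finset ℕ), Nonempty (G ≃g pathGraph k) := by
  have hsingle : ∀ {s : Finset V} {a : V}, #s < 2 → a ∈ s → s = {a} := fun hs ha =>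
    eq_singleton_iff_unique_mem.mpr ⟨ha, fun b hb => card_le_one.mp (by omega) b hb _ ha⟩
  have hpath := fun {a b : V} (p : G.Walk a b) => (hT.isAcyclic.isPath_iff_isChain p).mpr
  have hlx : ∀ l ∈ G.leafNeighbors u, l ≠ x := fun l hl => by
    rintro rfl; have := (mem_leafNeighbors.mp hl).2; omega
  have hmy : ∀ m ∈ G.leafNeighbors v, m ≠ y := fun m hm => by
    rintro rfl; have := (mem_leafNeighbors.mp hm).2; omega
  rcases (G.leafNeighbors u).eq_empty_or_nonempty with hLu | ⟨l, hl⟩ <;>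
    rcases (G.leafNeighbors v).eq_empty_or_nonempty with hLv | ⟨m, hm⟩
  · refine ⟨4, by simp, hT.nonempty_iso_pathGraph (p := .cons hux (.cons hxy (.cons hyv .nil)))
      (hpath _ (by simp [hux.ne, hxy.ne, huy, hxv])) fun z => ?_⟩
    simpa [hLu, hLv, or_assoc] using hcover z
  · refine ⟨5, by simp, hT.nonempty_iso_pathGraph
      (p := .cons hux (.cons hxy (.cons hyv (.cons (mem_leafNeighbors.mp hm).1 .nil))))
      (hpath _ (by simp [hux.ne, hxy.ne, hyv.ne, huy, hxv, (hmy m hm).symm])) fun z => ?_⟩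
    simpa [hLu, hsingle hv hm, or_assoc] using hcover z
  · refine ⟨5, by simp, hT.nonempty_iso_pathGraph
      (p := .cons (mem_leafNeighbors.mp hl).1.symm (.cons hux (.cons hxy (.cons hyv .nil))))
      (hpath _ (by simp [hux.ne, hxy.ne, (mem_leafNeighbors.mp hl).1.ne', huy, hxv, hlx l hl]))
      fun z => ?_⟩
    have := hcover z
    simp only [hsingle hu hl, mem_singleton, hLv, notMem_empty, or_false, Walk.support_cons,
      Walk.support_nil, List.mem_cons, List.not_mem_nil] at this ⊢
    tauto
  · refine ⟨6, by simp, hT.nonempty_iso_pathGraph (p := .cons (mem_leafNeighbors.mp hl).1.symm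
      (.cons hux (.cons hxy (.cons hyv (.cons (mem_leafNeighbors.mp hm).1 .nil)))))
      (hpath _ (by simp [hux.ne, hxy.ne, hyv.ne, (mem_leafNeighbors.mp hl).1.ne', huy, hxv,
        hlx l hl, (hmy m hm).symm])) fun z => ?_⟩
    have := hcover z
    simp only [hsingle hu hl, hsingle hv hm, mem_singleton, Walk.support_cons, Walk.support_nil,
      List.mem_cons, List.not_mem_nil, or_false] at this ⊢
    tauto

end Acyclic

lemma edgeCount_pair (G : SimpleGraph V) {u v x y : V} (huv : u ≠ v) (hxy : x ≠ y) :
    edgeCount G {u, v} {x, y} =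
      ((if G.Adj u x then 1 else 0) + if G.Adj u y then 1 else 0) +
      ((if G.Adj v x then 1 else 0) + if G.Adj v y then 1 else 0) := by
  rw [edgeCount, sum_pair huv, sum_pair hxy, sum_pair hxy]

def IsSplitPair (G : SimpleGraph V) (u v : V) : Prop :=
  u ≠ v ∧ ∀ x, x ≠ u → x ≠ v → (G.Adj u x ↔ ¬ G.Adj v x)

lemma isSplitPair_or_forall_adj_iff_of_not_isOddSet {G : SimpleGraph V} {u v : V} (huv : u ≠ v)
    (h : ¬ IsOddSet G {u, v}) :
    G.IsSplitPair u v ∨ ∀ x, x ≠ u → x ≠ v → (G.Adj u x ↔ G.Adj v x) := by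
  have hsame : ∀ x y, x ≠ u → x ≠ v → y ≠ u → y ≠ v → x ≠ y →
      (G.Adj u x ↔ ¬ G.Adj v x) → (G.Adj u y ↔ ¬ G.Adj v y) := by
    intro x y hxu hxv hyu hyv hxy hx
    by_contra hy
    refine h ⟨card_pair huv, {x, y}, card_pair hxy, ?_, ?_⟩
    · simp only [Finset.disjoint_left, mem_insert, mem_singleton]
      grind
    · rw [edgeCount_pair G huv hxy]
      by_cases G.Adj u x <;> by_cases G.Adj v x <;> by_cases G.Adj u y <;> by_cases G.Adj v y <;>
        simp_all [Nat.odd_iff]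
  by_cases hx₀ : ∃ x₀, x₀ ≠ u ∧ x₀ ≠ v ∧ (G.Adj u x₀ ↔ ¬ G.Adj v x₀)
  · obtain ⟨x₀, hx₀u, hx₀v, hx₀⟩ := hx₀
    refine Or.inl ⟨huv, fun x hxu hxv => ?_⟩
    obtain rfl | hx := eq_or_ne x₀ x
    · exact hx₀
    · exact hsame x₀ x hx₀u hx₀v hxu hxv hx hx₀
  · refine Or.inr fun x hxu hxv => ?_
    have := not_exists.mp hx₀ x
    tauto

lemma IsTree.exists_pair_subset_leafNeighbors [Fintype V] {G : SimpleGraph V} (hT : G.IsTree)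
    (h3 : 3 ≤ Fintype.card V) {u v : V} (huv : u ≠ v)
    (h : ∀ x, x ≠ u → x ≠ v → (G.Adj u x ↔ G.Adj v x)) :
    ∃ w, {u, v} ⊆ G.leafNeighbors w := by
  obtain ⟨x, w, hx, hwu, hwv, hxw⟩ := hT.connected.exists_adj_not_mem_pair h3 u v
  have huw : G.Adj u w := by rcases hx with rfl | rfl <;> simp_all
  have hvw : G.Adj v w := (h w hwu hwv).mp huw
  have hnadj : ¬ G.Adj u v := fun h' => hT.isAcyclic.not_adj_of_adj_of_adj h' huw hvw
  have hleaf : ∀ {a b}, a ≠ b → ¬ G.Adj a b → G.Adj a w → G.Adj b w →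
      (∀ x, x ≠ a → x ≠ b → (G.Adj a x ↔ G.Adj b x)) → G.degree a = 1 := by
    intro a b hab hnab haw hbw h
    refine degree_eq_one_iff_existsUnique_adj.mpr ⟨w, haw, fun z hz => ?_⟩
    have hzb : z ≠ b := by rintro rfl; exact hnab hz
    exact hT.isAcyclic.eq_of_adj_of_adj hab hz ((h z hz.ne' hzb).mp hz).symm haw hbw.symm
  refine ⟨w, ?_⟩
  simp only [insert_subset_iff, singleton_subset_iff, mem_leafNeighbors]
  exact ⟨⟨huw.symm, hleaf huv hnadj huw hvw h⟩, ⟨hvw.symm, hleaf huv.symm (fun h' => hnadj h'.symm)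
    hvw huw fun x h₁ h₂ => (h x h₂ h₁).symm⟩⟩

namespace IsSplitPair

section Basic

variable {G : SimpleGraph V} {u v : V}

lemma symm (h : G.IsSplitPair u v) : G.IsSplitPair v u :=
  ⟨h.1.symm, fun x hxv hxu => iff_not_comm.mp (h.2 x hxu hxv)⟩

lemma adj_or_adj (h : G.IsSplitPair u v) {x : V} (hxu : x ≠ u) (hxv : x ≠ v) :
    G.Adj u x ∨ G.Adj v x := by
  by_cases hux : G.Adj u x
  · exact Or.inl hux
  · exact Or.inr (not_not.mp (mt (h.2 x hxu hxv).mpr hux))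

lemma not_adj_of_adj (h : G.IsSplitPair u v) {x : V} (hux : G.Adj u x) : ¬ G.Adj v x := by
  obtain rfl | hxv := eq_or_ne x v
  · exact G.irrefl
  · exact (h.2 x hux.ne' hxv).mp hux

lemma isStar_of_isSplitPair (hG : G.IsAcyclic) {z : V} (h : G.IsSplitPair u v)
    (h' : G.IsSplitPair u z) (hvz : v ≠ z) (hnadj : ¬ G.Adj v z) : IsStar G := by
  have huz : G.Adj u z := (h.adj_or_adj h'.1.symm hvz.symm).resolve_right hnadj
  have huv : G.Adj u v := (h'.adj_or_adj h.1.symm hvz).resolve_right (fun h => hnadj h.symm)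
  have hrest : ∀ w, w ≠ u → w ≠ v → w ≠ z → G.Adj u w := fun w hwu hwv hwz => by
    by_contra huw
    have hvw := (h.adj_or_adj hwu hwv).resolve_left huw
    have hzw := (h'.adj_or_adj hwu hwz).resolve_left huw
    exact hwu (hG.eq_of_adj_of_adj hvz hvw hzw.symm huv.symm huz)
  have hv : ∀ w, G.Adj v w → w = u := fun w hvw => by
    by_contra hwu
    have hwz : w ≠ z := by rintro rfl; exact hnadj hvw
    exact h.not_adj_of_adj (hrest w hwu hvw.ne' hwz) hvw
  have hz : ∀ w, G.Adj z w → w = u := fun w hzw => by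
    by_contra hwu
    have hwv : w ≠ v := by rintro rfl; exact hnadj hzw.symm
    exact h'.not_adj_of_adj (hrest w hwu hwv hzw.ne') hzw
  refine ⟨u, fun a b hab => or_iff_not_imp_left.mpr fun hau => ?_⟩
  by_contra hbu
  have ha : a ≠ v ∧ a ≠ z := ⟨fun ha => hbu (hv b (ha ▸ hab)), fun ha => hbu (hz b (ha ▸ hab))⟩
  have hb : b ≠ v ∧ b ≠ z :=
    ⟨fun hb => hau (hv a (hb ▸ hab.symm)), fun hb => hau (hz a (hb ▸ hab.symm))⟩
  exact hG.not_adj_of_adj_of_adj (hrest a hau ha.1 ha.2) (hrest b hbu hb.1 hb.2) hab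

end Basic

variable [Fintype V] {G : SimpleGraph V} {u v : V}

lemma not_adj_of_isSplitPair (hT : G.IsTree) (h3 : 3 ≤ Fintype.card V) {z : V}
    (h : G.IsSplitPair u v) (h' : G.IsSplitPair u z) : ¬ G.Adj v z := by
  intro hvz
  have huz : ¬ G.Adj u z := h.symm.not_adj_of_adj hvz
  have huv : ¬ G.Adj u v := h'.symm.not_adj_of_adj hvz.symm
  obtain ⟨x, w, hx, hwv, hwz, hxw⟩ := hT.connected.exists_adj_not_mem_pair h3 v z
  have hwu : w ≠ u := by rintro rfl; rcases hx with rfl | rfl <;> simp_all [adj_comm]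
  rcases hx with rfl | rfl
  · have hzw := (h'.adj_or_adj hwu hwz).resolve_left (h.symm.not_adj_of_adj hxw)
    exact hT.isAcyclic.not_adj_of_adj_of_adj hvz.symm hzw hxw
  · have hvw := (h.adj_or_adj hwu hwv).resolve_left (h'.symm.not_adj_of_adj hxw)
    exact hT.isAcyclic.not_adj_of_adj_of_adj hvz hvw hxw

lemma eq_of_isSplitPair (hT : G.IsTree) (h3 : 3 ≤ Fintype.card V) (hstar : ¬ IsStar G) {z : V}
    (h : G.IsSplitPair u v) (h' : G.IsSplitPair u z) : v = z := by
  by_contra hvz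
  exact hstar (h.isStar_of_isSplitPair hT.isAcyclic h' hvz (h.not_adj_of_isSplitPair hT h3 h'))

lemma mem_of_two_le_card_leafNeighbors (h : G.IsSplitPair u v) {w : V}
    (hw : 2 ≤ #(G.leafNeighbors w)) : w = u ∨ w = v := by
  obtain ⟨l₁, hl₁, l₂, hl₂, hl⟩ := one_lt_card.mp hw
  rw [mem_leafNeighbors] at hl₁ hl₂
  by_contra! hwuv
  have hmem : ∀ {l}, G.Adj w l → G.degree l = 1 → l = u ∨ l = v := fun hwl hl => by
    by_contra! hluv
    rcases h.adj_or_adj hluv.1 hluv.2 with h' | h'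
    · exact hwuv.1 (eq_of_degree_eq_one hl hwl.symm h'.symm)
    · exact hwuv.2 (eq_of_degree_eq_one hl hwl.symm h'.symm)
  obtain ⟨hwu, hwv⟩ : G.Adj w u ∧ G.Adj w v := by
    rcases hmem hl₁.1 hl₁.2 with rfl | rfl <;> rcases hmem hl₂.1 hl₂.2 with rfl | rfl
    exacts [absurd rfl hl, ⟨hl₁.1, hl₂.1⟩, ⟨hl₂.1, hl₁.1⟩, absurd rfl hl]
  exact h.not_adj_of_adj hwu.symm hwv.symm

lemma degree_add_degree (h : G.IsSplitPair u v) :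
    G.degree u + G.degree v = #({u, v}ᶜ : Finset V) + 2 * if G.Adj u v then 1 else 0 := by
  have hdeg : ∀ w, G.degree w = ∑ z, if G.Adj w z then 1 else 0 := fun w => by
    rw [← card_neighborFinset_eq_degree, neighborFinset_eq_filter, card_filter]
  have hcompl : ∀ z ∈ ({u, v}ᶜ : Finset V),
      ((if G.Adj u z then 1 else 0) + if G.Adj v z then 1 else 0) = 1 := fun z hz => by
    simp only [mem_compl, mem_insert, mem_singleton, not_or] at hz
    have := h.2 z hz.1 hz.2
    by_cases G.Adj u z <;> by_cases G.Adj v z <;> simp_all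
  rw [hdeg, hdeg, ← sum_add_distrib, ← sum_add_sum_compl {u, v}, sum_congr rfl hcompl,
    sum_pair h.1, card_eq_sum_ones ({u, v}ᶜ : Finset V), G.adj_comm v u]
  simp only [SimpleGraph.irrefl, if_false]
  split_ifs <;> omega

lemma sum_degree_compl (hT : G.IsTree) (h : G.IsSplitPair u v) :
    ∑ z ∈ ({u, v}ᶜ : Finset V), G.degree z + 2 * (if G.Adj u v then 1 else 0) =
      Fintype.card V := by
  have hsum := G.sum_degrees_eq_twice_card_edges
  have hedges := hT.card_edgeFinset
  have hcard := card_compl_pair_add_two h.1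
  rw [← sum_add_sum_compl {u, v}, sum_pair h.1, h.degree_add_degree] at hsum
  omega

lemma sum_degree_le (hT : G.IsTree) (h : G.IsSplitPair u v) {t : Finset V}
    (ht : t ⊆ ({u, v}ᶜ : Finset V)) :
    ∑ z ∈ t, G.degree z + 2 * (if G.Adj u v then 1 else 0) ≤ #t + 2 := by
  have : Nontrivial V := ⟨u, v, h.1⟩
  have hpos : #(({u, v}ᶜ : Finset V) \ t) ≤ ∑ z ∈ ({u, v}ᶜ : Finset V) \ t, G.degree z := by
    simpa using card_nsmul_le_sum (({u, v}ᶜ : Finset V) \ t) (G.degree ·) 1 fun z _ =>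
      hT.connected.preconnected.degree_pos_of_nontrivial z
  have hcard := card_compl_pair_add_two h.1
  have := h.sum_degree_compl hT
  rw [← sum_sdiff ht, card_sdiff_of_subset ht] at *
  have := card_le_card ht
  omega

lemma mem_leafNeighbors_of_adj (hT : G.IsTree) (h : G.IsSplitPair u v) (hadj : G.Adj u v)
    {z : V} (hzu : z ≠ u) (hzv : z ≠ v) : z ∈ G.leafNeighbors u ∨ z ∈ G.leafNeighbors v := by
  have : Nontrivial V := ⟨u, v, h.1⟩
  have hpos := hT.connected.preconnected.degree_pos_of_nontrivial z
  have hsum := h.sum_degree_le hT (t := {z}) (by simp [hzu, hzv])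
  simp only [sum_singleton, hadj, if_true, card_singleton] at hsum
  rcases h.adj_or_adj hzu hzv with h' | h'
  exacts [.inl (mem_leafNeighbors.mpr ⟨h', by omega⟩), .inr (mem_leafNeighbors.mpr ⟨h', by omega⟩)]

lemma mem_leafNeighbors_of_not_adj (hT : G.IsTree) (h : G.IsSplitPair u v) (hnadj : ¬ G.Adj u v)
    {x y z : V} (hux : G.Adj u x) (hxy : G.Adj x y) (hyv : G.Adj y v) (hx : 2 ≤ G.degree x)
    (hy : 2 ≤ G.degree y) (hzu : z ≠ u) (hzv : z ≠ v) (hzx : z ≠ x) (hzy : z ≠ y) :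
    z ∈ G.leafNeighbors u ∨ z ∈ G.leafNeighbors v := by
  have : Nontrivial V := ⟨u, v, h.1⟩
  have hpos := hT.connected.preconnected.degree_pos_of_nontrivial z
  have hxv : x ≠ v := by rintro rfl; exact hnadj hux
  have hyu : y ≠ u := by rintro rfl; exact hnadj hyv
  have hsum := h.sum_degree_le hT (t := {x, y, z})
    (by simp [insert_subset_iff, hux.ne', hxv, hyu, hyv.ne, hzu, hzv])
  rw [sum_insert (by simp [hxy.ne, hzx.symm]), sum_pair (Ne.symm hzy),
    card_insert_of_notMem (by simp [hxy.ne, hzx.symm]), card_pair (Ne.symm hzy)] at hsum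
  simp only [hnadj, if_false] at hsum
  rcases h.adj_or_adj hzu hzv with h' | h'
  exacts [.inl (mem_leafNeighbors.mpr ⟨h', by omega⟩), .inr (mem_leafNeighbors.mpr ⟨h', by omega⟩)]

lemma two_le_card_leafNeighbors_of_adj (hT : G.IsTree) (hn : 4 ≤ Fintype.card V)
    (h4 : ¬ Nonempty (G ≃g pathGraph 4)) (h : G.IsSplitPair u v) (hadj : G.Adj u v) :
    2 ≤ #(G.leafNeighbors u) ∨ 2 ≤ #(G.leafNeighbors v) := by
  by_contra! hsmall
  have hsub : ({u, v}ᶜ : Finset V) ⊆ G.leafNeighbors u ∪ G.leafNeighbors v := fun z hz => by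
    simp only [mem_compl, mem_insert, mem_singleton, not_or] at hz
    exact mem_union.mpr (h.mem_leafNeighbors_of_adj hT hadj hz.1 hz.2)
  have hcard := card_compl_pair_add_two h.1
  have hle := (card_le_card hsub).trans (card_union_le _ _)
  obtain ⟨l, hl⟩ := card_eq_one.mp (show #(G.leafNeighbors u) = 1 by omega)
  obtain ⟨m, hm⟩ := card_eq_one.mp (show #(G.leafNeighbors v) = 1 by omega)
  have hcompl : ({u, v}ᶜ : Finset V) = {l, m} := by
    rw [hl, hm] at hsub
    exact eq_of_subset_of_card_le hsub (card_le_two.trans (by omega))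
  have hl' : l ∈ ({u, v}ᶜ : Finset V) := hcompl ▸ mem_insert_self l {m}
  have hm' : m ∈ ({u, v}ᶜ : Finset V) := hcompl ▸ mem_insert_of_mem (mem_singleton_self m)
  have hlu : G.Adj l u := (mem_leafNeighbors.mp (hl ▸ mem_singleton_self l)).1.symm
  have hvm : G.Adj v m := (mem_leafNeighbors.mp (hm ▸ mem_singleton_self m)).1
  simp only [mem_compl, mem_insert, mem_singleton, not_or] at hl' hm'
  refine h4 (hT.nonempty_iso_pathGraph (p := .cons hlu (.cons hadj (.cons hvm .nil)))
    ((hT.isAcyclic.isPath_iff_isChain _).mpr (by simp [hl'.2, h.1, Ne.symm hm'.1])) fun z => ?_)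
  have hz := (hcompl ▸ union_compl ({u, v} : Finset V)).ge (mem_univ z)
  simp only [union_insert, insert_union, singleton_union, mem_insert, mem_singleton,
    Walk.support_cons, Walk.support_nil, List.mem_cons, List.not_mem_nil, or_false] at hz ⊢
  tauto

lemma two_le_card_leafNeighbors_of_not_adj (hT : G.IsTree) (h4 : ¬ Nonempty (G ≃g pathGraph 4))
    (h5 : ¬ Nonempty (G ≃g pathGraph 5)) (h6 : ¬ Nonempty (G ≃g pathGraph 6))
    (h : G.IsSplitPair u v) (hnadj : ¬ G.Adj u v) {x : V} (hux : G.Adj u x)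
    (hx : 2 ≤ G.degree x) :
    2 ≤ #(G.leafNeighbors u) ∨ 2 ≤ #(G.leafNeighbors v) := by
  by_contra! hsmall
  obtain ⟨y, hxy, hyu⟩ := exists_mem_ne hx u
  rw [mem_neighborFinset] at hxy
  have hxv : x ≠ v := by rintro rfl; exact hnadj hux
  have hyv : G.Adj y v := by
    have hyv' : y ≠ v := by rintro rfl; exact h.not_adj_of_adj hux hxy.symm
    exact ((h.adj_or_adj hyu hyv').resolve_left
      (hT.isAcyclic.not_adj_of_adj_of_adj hux.symm hxy)).symm
  have hy : 2 ≤ G.degree y := by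
    simpa [card_pair hxv] using card_le_card (show ({x, v} : Finset V) ⊆ G.neighborFinset y by
      simp [insert_subset_iff, hxy.symm, hyv])
  have hcover : ∀ z, z = u ∨ z = x ∨ z = y ∨ z = v ∨
      z ∈ G.leafNeighbors u ∨ z ∈ G.leafNeighbors v := by
    intro z
    by_cases hz : z = u ∨ z = x ∨ z = y ∨ z = v
    · tauto
    push Not at hz
    have := h.mem_leafNeighbors_of_not_adj hT hnadj hux hxy hyv hx hy hz.1 hz.2.2.2 hz.2.1 hz.2.2.1
    tauto
  obtain ⟨k, hk, hiso⟩ := hT.exists_iso_pathGraph_of_forall_mem hux hxy hyv hyu.symm hxv hx hy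
    hsmall.1 hsmall.2 hcover
  simp only [mem_insert, mem_singleton] at hk
  rcases hk with rfl | rfl | rfl
  exacts [h4 hiso, h5 hiso, h6 hiso]

lemma two_le_card_leafNeighbors (hT : G.IsTree) (hn : 4 ≤ Fintype.card V)
    (h4 : ¬ Nonempty (G ≃g pathGraph 4)) (h5 : ¬ Nonempty (G ≃g pathGraph 5))
    (h6 : ¬ Nonempty (G ≃g pathGraph 6)) (h : G.IsSplitPair u v) :
    2 ≤ #(G.leafNeighbors u) ∨ 2 ≤ #(G.leafNeighbors v) := by
  by_cases hadj : G.Adj u v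
  · exact h.two_le_card_leafNeighbors_of_adj hT hn h4 hadj
  obtain ⟨x, hx, hx2⟩ : ∃ x ∈ ({u, v}ᶜ : Finset V), 1 < G.degree x := by
    refine exists_lt_of_sum_lt ?_
    have := h.sum_degree_compl hT
    have := card_compl_pair_add_two h.1
    simp only [hadj, if_false, sum_const, smul_eq_mul, mul_one] at *
    omega
  simp only [mem_compl, mem_insert, mem_singleton, not_or] at hx
  rcases h.adj_or_adj hx.1 hx.2 with hux | hvx
  · exact h.two_le_card_leafNeighbors_of_not_adj hT h4 h5 h6 hadj hux hx2
  · exact (h.symm.two_le_card_leafNeighbors_of_not_adj hT h4 h5 h6 (fun h' => hadj h'.symm)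
      hvx hx2).symm

lemma pair_eq_of_isSplitPair (hT : G.IsTree) (hn : 4 ≤ Fintype.card V) (hstar : ¬ IsStar G)
    (h4 : ¬ Nonempty (G ≃g pathGraph 4)) (h5 : ¬ Nonempty (G ≃g pathGraph 5))
    (h6 : ¬ Nonempty (G ≃g pathGraph 6)) (h : G.IsSplitPair u v) {a b : V}
    (h' : G.IsSplitPair a b) : ({a, b} : Finset V) = {u, v} := by
  have key : ∀ {u v}, G.IsSplitPair u v → 2 ≤ #(G.leafNeighbors u) →
      ({a, b} : Finset V) = {u, v} := by
    intro u v h hu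
    rcases h'.mem_of_two_le_card_leafNeighbors hu with rfl | rfl
    · rw [h.eq_of_isSplitPair hT (by omega) hstar h']
    · rw [h.eq_of_isSplitPair hT (by omega) hstar h'.symm, pair_comm]
  rcases h.two_le_card_leafNeighbors hT hn h4 h5 h6 with hu | hv
  · exact key h hu
  · rw [key h.symm hv, pair_comm]

end IsSplitPair

section Counting

variable [Fintype V] {G : SimpleGraph V}

noncomputable def siblingLeafPairs (G : SimpleGraph V) : Finset (Finset V) :=
  univ.biUnion fun w => (G.leafNeighbors w).powersetCard 2

noncomputable def splitPairs (G : SimpleGraph V) : Finset (Finset V) :=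
  {X | ∃ u v, X = {u, v} ∧ G.IsSplitPair u v}

lemma mem_siblingLeafPairs_or_mem_splitPairs (hT : G.IsTree) (h3 : 3 ≤ Fintype.card V)
    {X : Finset V} (hX : #X = 2) (hodd : ¬ IsOddSet G X) :
    X ∈ G.siblingLeafPairs ∨ X ∈ G.splitPairs := by
  obtain ⟨u, v, huv, rfl⟩ := card_eq_two.mp hX
  rcases isSplitPair_or_forall_adj_iff_of_not_isOddSet huv hodd with h | h
  · exact Or.inr (by simpa [splitPairs] using ⟨u, v, rfl, h⟩)
  · obtain ⟨w, hw⟩ := hT.exists_pair_subset_leafNeighbors h3 huv h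
    exact Or.inl (mem_biUnion.mpr ⟨w, mem_univ w, mem_powersetCard.mpr ⟨hw, hX⟩⟩)

lemma two_mul_card_siblingLeafPairs_le (hT : G.IsTree) (h3 : 3 ≤ Fintype.card V)
    (hstar : ¬ IsStar G) :
    2 * #G.siblingLeafPairs ≤ (Fintype.card V - 2) * (maxLeafCount G - 1) := by
  calc 2 * #G.siblingLeafPairs ≤ ∑ w, 2 * (#(G.leafNeighbors w)).choose 2 := by
        rw [← mul_sum]
        gcongr
        exact card_biUnion_le.trans (by simp [card_powersetCard])
    _ ≤ ∑ w, #(G.leafNeighbors w) * (maxLeafCount G - 1) := by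
        refine sum_le_sum fun w _ => ?_
        rw [Nat.choose_two_right, mul_comm, Nat.div_two_mul_two_of_even (Nat.even_mul_pred_self _)]
        exact Nat.mul_le_mul_left _
          (Nat.sub_le_sub_right (card_leafNeighbors_le_maxLeafCount G w) 1)
    _ ≤ (Fintype.card V - 2) * (maxLeafCount G - 1) := by
        rw [← sum_mul]
        have := G.sum_card_leafNeighbors_le
        have := hT.card_leaves_add_two_le h3 hstar
        gcongr
        omega

lemma card_splitPairs_lt_maxLeafCount (hT : G.IsTree) (hn : 4 ≤ Fintype.card V)
    (hstar : ¬ IsStar G) (h4 : ¬ Nonempty (G ≃g pathGraph 4))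
    (h5 : ¬ Nonempty (G ≃g pathGraph 5)) (h6 : ¬ Nonempty (G ≃g pathGraph 6)) :
    #G.splitPairs < maxLeafCount G := by
  rcases G.splitPairs.eq_empty_or_nonempty with hempty | ⟨X, hX⟩
  · rw [hempty, card_empty]
    exact hT.one_le_maxLeafCount (by omega)
  have hmem : ∀ {Y}, Y ∈ G.splitPairs → ∃ a b, Y = {a, b} ∧ G.IsSplitPair a b := fun hY => by
    simpa [splitPairs] using hY
  obtain ⟨u, v, rfl, h⟩ := hmem hX
  have hcard : #G.splitPairs ≤ 1 := card_le_one.mpr fun Y hY Z hZ => by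
    obtain ⟨a, b, rfl, hab⟩ := hmem hY
    obtain ⟨c, d, rfl, hcd⟩ := hmem hZ
    rw [h.pair_eq_of_isSplitPair hT hn hstar h4 h5 h6 hab,
      h.pair_eq_of_isSplitPair hT hn hstar h4 h5 h6 hcd]
  have hD : 2 ≤ maxLeafCount G := by
    rcases h.two_le_card_leafNeighbors hT hn h4 h5 h6 with hu | hv
    · exact hu.trans (card_leafNeighbors_le_maxLeafCount G u)
    · exact hv.trans (card_leafNeighbors_le_maxLeafCount G v)
  omega

lemma two_mul_card_not_isOddSet_le (hT : G.IsTree) (hn : 4 ≤ Fintype.card V)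
    (hstar : ¬ IsStar G) (h4 : ¬ Nonempty (G ≃g pathGraph 4))
    (h5 : ¬ Nonempty (G ≃g pathGraph 5)) (h6 : ¬ Nonempty (G ≃g pathGraph 6)) :
    2 * #{X ∈ powersetCard 2 univ | ¬ IsOddSet G X} ≤
      Fintype.card V * (maxLeafCount G - 1) := by
  have hbad : #{X ∈ powersetCard 2 univ | ¬ IsOddSet G X} ≤
      #G.siblingLeafPairs + #G.splitPairs := by
    refine (card_le_card fun X hX => mem_union.mpr ?_).trans (card_union_le _ _)
    rw [mem_filter, mem_powersetCard_univ] at hX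
    exact mem_siblingLeafPairs_or_mem_splitPairs hT (by omega) hX.1 hX.2
  have hsib := two_mul_card_siblingLeafPairs_le hT (by omega) hstar
  have hsplit := card_splitPairs_lt_maxLeafCount hT hn hstar h4 h5 h6
  have : (Fintype.card V - 2) * (maxLeafCount G - 1) + 2 * (maxLeafCount G - 1) =
      Fintype.card V * (maxLeafCount G - 1) := by
    rw [← add_mul, Nat.sub_add_cancel (by omega)]
  omega

lemma numOddSets_add_card_not_isOddSet (G : SimpleGraph V) :
    numOddSets G + #{X ∈ powersetCard 2 univ | ¬ IsOddSet G X} = (Fintype.card V).choose 2 := by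
  have : numOddSets G = #{X ∈ powersetCard 2 univ | IsOddSet G X} := by
    rw [numOddSets, Nat.card_eq_fintype_card, Fintype.card_subtype]
    congr 1
    ext X
    simpa using fun h : IsOddSet G X => h.1
  rw [this, card_filter_add_card_filter_not, card_powersetCard, card_univ]

end Counting

end SimpleGraph

/-- a tree of order `n ≥ 4` which is not a star nor a path on 4, 5 or 6 vertices
has at least `n (n - D(T)) / 2` odd sets. -/
theorem numOddSets_lower_bound [Fintype V] (T : SimpleGraph V) (hT : T.IsTree)
    (hn : 4 ≤ Fintype.card V) (hstar : ¬ IsStar T)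
    (h4 : ¬ Nonempty (T ≃g pathGraph 4)) (h5 : ¬ Nonempty (T ≃g pathGraph 5))
    (h6 : ¬ Nonempty (T ≃g pathGraph 6)) :
    (Fintype.card V : ℝ) * ((Fintype.card V : ℝ) - maxLeafCount T) / 2 ≤ numOddSets T := by
  have hD : 1 ≤ maxLeafCount T := hT.one_le_maxLeafCount (by omega)
  have hbad : 2 * (#{X ∈ powersetCard 2 univ | ¬ IsOddSet T X} : ℝ) ≤
      Fintype.card V * ((maxLeafCount T - 1 : ℕ) : ℝ) := by
    exact_mod_cast two_mul_card_not_isOddSet_le hT hn hstar h4 h5 h6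
  rw [Nat.cast_sub hD, Nat.cast_one] at hbad
  have hsum : (numOddSets T : ℝ) + #{X ∈ powersetCard 2 univ | ¬ IsOddSet T X} =
      Fintype.card V * (Fintype.card V - 1) / 2 := by
    rw [← Nat.cast_choose_two, ← numOddSets_add_card_not_isOddSet T]
    push_cast
    ring
  linarith
end
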